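/- Assume equation (4mu′) holds and equation (dkq) holds. Then there exist real constants μ_1, …, μ_{2g} such that for all t ∈ ℝ^g and all real ξ ≠ 0: 𝐮'(ξ)² + 2𝐮''(ξ)(2 − 𝐮(ξ)) + 4(ξ⁻¹ + u_1)(2 − 𝐮(ξ))² = 16ξ⁻¹ + 4∑_{i=1}^{2g} μ_i ξ^i. Equivalently, every t-partial derivative ∂_j (j = 1, …, g) of the left-hand side vanishes identically for every fixed ξ ≠ 0. -/

import Mathlib

/-!
Fix `ξ ≠ 0` and `j`, and put `Q = 2 − 𝐮(ξ)`, `a = D_j(2 − 𝐮(ξ))`, `c = ξ⁻¹ + u_1`. Then (4mu′)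
says `Q‴ = 2c′Q + 4cQ′` and (dkq) says `∂_j Q = aQ′ − a′Q`. Comparing coefficients of powers of
`ξ`, (4mu′) gives `u_i‴ = 2u_1′u_i + 4u_1u_i′ + 4u_{i+1}′` and (dkq) gives `∂_j u_1 = u_j′`
(the cross terms `𝐮_{<j}𝐮′_{≥j} − 𝐮′_{<j}𝐮_{≥j}` are `O(ξ^{j+1})`). Summing the former over `i < j`
telescopes to `a‴ = 2c′a + 4ca′ − 2∂_j c`, so `a` solves the equation of `Q` up to a source term.
For any such triple, `∂_j (Q′² − 2Q″Q + 4cQ²) = 0`. That quantity is the left-hand side, so it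
does not depend on `t`; at a fixed `t` it is `16ξ⁻¹` plus a polynomial in `ξ` of degree `≤ 2g`
without constant term, whose coefficients are the `4μ_i`.
-/

open scoped BigOperators

/-- Partial derivative `∂_i` (1-based index) on functions of `t : Fin g → ℝ`;
`∂_i ≡ 0` for `i = 0` or `i > g` (in particular `∂_{g+1} ≡ 0`). -/
noncomputable def pd {g : ℕ} {E : Type*} [NormedAddCommGroup E] [NormedSpace ℝ E]
    (i : ℕ) (f : (Fin g → ℝ) → E) : (Fin g → ℝ) → E :=
  fun t => if h : 1 ≤ i ∧ i ≤ g then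
    fderiv ℝ f t (Pi.single (⟨i - 1, by omega⟩ : Fin g) 1) else 0

/-- The generating function `𝐮(ξ) = ∑_{i=1}^g u_i ξ^i`. -/
noncomputable def bfu {g : ℕ} (u : ℕ → (Fin g → ℝ) → ℝ) (ξ : ℝ) :
    (Fin g → ℝ) → ℝ :=
  fun t => ∑ i ∈ Finset.Icc 1 g, u i t * ξ ^ i

/-- `𝐮'(ξ) = ∑_{i=1}^g u_i' ξ^i` (prime is `∂_x = ∂_1`). -/
noncomputable def bfu1 {g : ℕ} (u : ℕ → (Fin g → ℝ) → ℝ) (ξ : ℝ) :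
    (Fin g → ℝ) → ℝ :=
  fun t => ∑ i ∈ Finset.Icc 1 g, pd 1 (u i) t * ξ ^ i

/-- `𝐮''(ξ) = ∑_{i=1}^g u_i'' ξ^i`. -/
noncomputable def bfu2 {g : ℕ} (u : ℕ → (Fin g → ℝ) → ℝ) (ξ : ℝ) :
    (Fin g → ℝ) → ℝ :=
  fun t => ∑ i ∈ Finset.Icc 1 g, pd 1 (pd 1 (u i)) t * ξ ^ i

/-- `𝐮'''(ξ) = ∑_{i=1}^g u_i''' ξ^i`. -/
noncomputable def bfu3 {g : ℕ} (u : ℕ → (Fin g → ℝ) → ℝ) (ξ : ℝ) :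
    (Fin g → ℝ) → ℝ :=
  fun t => ∑ i ∈ Finset.Icc 1 g, pd 1 (pd 1 (pd 1 (u i))) t * ξ ^ i

/-- `D_k(2 − 𝐮(ξ)) = (1/2)(2·ξ^{1−k} + ∑_{i=1}^{k−1} (−u_i) ξ^{i−k+1})`,
the operator `D_k` applied to the Laurent-type polynomial `2 − 𝐮(ξ)`. -/
noncomputable def DkA {g : ℕ} (u : ℕ → (Fin g → ℝ) → ℝ) (k : ℕ) (ξ : ℝ) :
    (Fin g → ℝ) → ℝ :=
  fun t => (1/2 : ℝ) * (2 * ξ ^ (1 - (k:ℤ))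
    + ∑ i ∈ Finset.Icc 1 (k-1), (-(u i t)) * ξ ^ ((i:ℤ) - (k:ℤ) + 1))

/-- `D_k(𝐮'(ξ)) = (1/2)∑_{i=1}^{k−1} u_i' ξ^{i−k+1}`. -/
noncomputable def DkB {g : ℕ} (u : ℕ → (Fin g → ℝ) → ℝ) (k : ℕ) (ξ : ℝ) :
    (Fin g → ℝ) → ℝ :=
  fun t => (1/2 : ℝ) * ∑ i ∈ Finset.Icc 1 (k-1), pd 1 (u i) t * ξ ^ ((i:ℤ) - (k:ℤ) + 1)

open Polynomial Finset
open scoped ContDiff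

section PartialDerivatives

variable {g : ℕ} {E : Type*} [NormedAddCommGroup E] [NormedSpace ℝ E] {i j : ℕ}

theorem pd_of_not_mem (h : ¬(1 ≤ i ∧ i ≤ g)) (f : (Fin g → ℝ) → E) : pd i f = fun _ => 0 := by
  funext t; simp [pd, h]

theorem pd_apply_of_mem (h : 1 ≤ i ∧ i ≤ g) (f : (Fin g → ℝ) → E) (t : Fin g → ℝ) :
    pd i f t = fderiv ℝ f t (Pi.single ⟨i - 1, by omega⟩ 1) := by
  simp [pd, h]

theorem contDiff_pd (i : ℕ) {f : (Fin g → ℝ) → E} (hf : ContDiff ℝ ∞ f) :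
    ContDiff ℝ ∞ (pd i f) := by
  by_cases h : 1 ≤ i ∧ i ≤ g
  · simp only [funext (pd_apply_of_mem h f)]
    exact (hf.fderiv_right le_rfl).clm_apply contDiff_const
  · rw [pd_of_not_mem h]
    exact contDiff_const

theorem pd_const (i : ℕ) (c : E) (t : Fin g → ℝ) : pd i (fun _ => c) t = 0 := by
  unfold pd; split_ifs <;> simp

variable {f f' : (Fin g → ℝ) → E} {t : Fin g → ℝ}

theorem pd_const_add (c : E) : pd i (fun s => c + f s) t = pd i f t := by
  unfold pd; split_ifs <;> simp

theorem pd_const_sub (c : E) : pd i (fun s => c - f s) t = -pd i f t := by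
  unfold pd; split_ifs <;> simp [fderiv_const_sub]

theorem pd_neg : pd i (fun s => -f s) t = -pd i f t := by
  unfold pd; split_ifs <;> simp

theorem pd_add (hf : DifferentiableAt ℝ f t) (hf' : DifferentiableAt ℝ f' t) :
    pd i (fun s => f s + f' s) t = pd i f t + pd i f' t := by
  unfold pd; split_ifs <;> simp [fderiv_fun_add hf hf']

theorem pd_sub (hf : DifferentiableAt ℝ f t) (hf' : DifferentiableAt ℝ f' t) :
    pd i (fun s => f s - f' s) t = pd i f t - pd i f' t := by
  unfold pd; split_ifs <;> simp [fderiv_fun_sub hf hf']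

theorem pd_sum {ι : Type*} (s : Finset ι) {F : ι → (Fin g → ℝ) → E}
    (hF : ∀ n ∈ s, DifferentiableAt ℝ (F n) t) :
    pd i (fun x => ∑ n ∈ s, F n x) t = ∑ n ∈ s, pd i (F n) t := by
  unfold pd; split_ifs <;> simp [fderiv_fun_sum hF]

theorem pd_mul {f f' : (Fin g → ℝ) → ℝ} (hf : DifferentiableAt ℝ f t)
    (hf' : DifferentiableAt ℝ f' t) :
    pd i (fun s => f s * f' s) t = f t * pd i f' t + pd i f t * f' t := by
  unfold pd; split_ifs <;> simp [fderiv_fun_mul hf hf', mul_comm]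

theorem pd_pow {f : (Fin g → ℝ) → ℝ} (n : ℕ) (hf : DifferentiableAt ℝ f t) :
    pd i (fun s => f s ^ n) t = n * f t ^ (n - 1) * pd i f t := by
  unfold pd; split_ifs <;> simp [fderiv_fun_pow n hf, mul_assoc]

theorem pd_comm (i j : ℕ) {f : (Fin g → ℝ) → E} (hf : ContDiff ℝ ∞ f) (t : Fin g → ℝ) :
    pd i (pd j f) t = pd j (pd i f) t := by
  by_cases hi : 1 ≤ i ∧ i ≤ g
  · by_cases hj : 1 ≤ j ∧ j ≤ g
    · have hdf : Differentiable ℝ (fderiv ℝ f) :=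
        (hf.fderiv_right (m := ∞) le_rfl).differentiable (by simp)
      have key (v w : Fin g → ℝ) :
          fderiv ℝ (fun s => fderiv ℝ f s w) t v = fderiv ℝ (fderiv ℝ f) t v w := by
        rw [fderiv_clm_apply (hdf t) (differentiableAt_const w)]; simp
      have hsymm : IsSymmSndFDerivAt ℝ f t :=
        hf.contDiffAt.isSymmSndFDerivAt (by
          rw [minSmoothness_of_isRCLikeNormedField]; exact WithTop.coe_le_coe.2 le_top)
      rw [pd_apply_of_mem hi, funext (pd_apply_of_mem hj f), pd_apply_of_mem hj,
        funext (pd_apply_of_mem hi f), key, key, hsymm]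
    · simp [pd_of_not_mem hj, pd_const]
  · simp [pd_of_not_mem hi, pd_const]

theorem eq_of_forall_pd_eq_zero (hf : Differentiable ℝ f)
    (h : ∀ j, 1 ≤ j → j ≤ g → ∀ t, pd j f t = 0) (t t' : Fin g → ℝ) : f t = f t' := by
  refine is_const_of_fderiv_eq_zero hf (fun s => ?_) t t'
  refine ContinuousLinearMap.coe_injective (LinearMap.pi_ext fun b x => ?_)
  have hb : fderiv ℝ f s (Pi.single b 1) = 0 := by simpa [pd] using h (b + 1) (by omega) b.2 s
  rw [← mul_one x, ← smul_eq_mul, Pi.single_smul, map_smul]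
  simp [hb]

end PartialDerivatives

section FirstIntegral

variable {g : ℕ} {i j : ℕ} {Q a c : (Fin g → ℝ) → ℝ}

theorem pd_firstIntegral_eq_zero (hQ : ContDiff ℝ ∞ Q) (ha : ContDiff ℝ ∞ a)
    (hc : ContDiff ℝ ∞ c) (t : Fin g → ℝ)
    (hQj : pd j Q = fun s => a s * pd i Q s - pd i a s * Q s)
    (hQ3 : pd i (pd i (pd i Q)) t = 2 * pd i c t * Q t + 4 * c t * pd i Q t)
    (ha3 : pd i (pd i (pd i a)) t = 2 * pd i c t * a t + 4 * c t * pd i a t - 2 * pd j c t) :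
    pd j (fun s => pd i Q s ^ 2 - 2 * pd i (pd i Q) s * Q s + 4 * c s * Q s ^ 2) t = 0 := by
  have hQ1 := contDiff_pd i hQ
  have ha1 := contDiff_pd i ha
  have hQd := hQ.differentiable (by simp)
  have hQ1d := hQ1.differentiable (by simp)
  have hQ2d := (contDiff_pd i hQ1).differentiable (by simp)
  have had := ha.differentiable (by simp)
  have ha1d := ha1.differentiable (by simp)
  have ha2d := (contDiff_pd i ha1).differentiable (by simp)
  have hcd := hc.differentiable (by simp)
  have hjQ1 : pd j (pd i Q) = fun s => a s * pd i (pd i Q) s - pd i (pd i a) s * Q s := by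
    funext s
    rw [← pd_comm i j hQ, hQj]
    simp (disch := fun_prop) only [pd_sub, pd_mul]
    ring
  have hjQ2 : pd j (pd i (pd i Q)) t = pd i a t * pd i (pd i Q) t
      + a t * pd i (pd i (pd i Q)) t - pd i (pd i (pd i a)) t * Q t
      - pd i (pd i a) t * pd i Q t := by
    rw [← pd_comm i j hQ1, hjQ1]
    simp (disch := fun_prop) only [pd_sub, pd_mul]
    ring
  simp (disch := fun_prop) only [pd_add, pd_sub, pd_mul, pd_pow, pd_const]
  rw [hjQ1, hjQ2, hQj, hQ3, ha3]
  push_cast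
  ring

end FirstIntegral

section GeneratingPolynomial

variable {R : Type*} [CommSemiring R]

noncomputable def genPoly (s : Finset ℕ) (a : ℕ → R) : R[X] := ∑ i ∈ s, C (a i) * X ^ i

theorem eval_genPoly (s : Finset ℕ) (a : ℕ → R) (x : R) :
    (genPoly s a).eval x = ∑ i ∈ s, a i * x ^ i := by
  simp [genPoly, eval_finsetSum]

theorem coeff_genPoly (s : Finset ℕ) (a : ℕ → R) (n : ℕ) :
    (genPoly s a).coeff n = if n ∈ s then a n else 0 := by
  simp [genPoly, finsetSum_coeff]

theorem X_pow_dvd_genPoly {s : Finset ℕ} {n : ℕ} (h : ∀ i ∈ s, n ≤ i) (a : ℕ → R) :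
    X ^ n ∣ genPoly s a :=
  Finset.dvd_sum fun i hi => (pow_dvd_pow X (h i hi)).mul_left _

theorem natDegree_genPoly_le {s : Finset ℕ} {n : ℕ} (h : ∀ i ∈ s, i ≤ n) (a : ℕ → R) :
    (genPoly s a).natDegree ≤ n :=
  natDegree_sum_le_of_forall_le _ _ fun i hi => (natDegree_C_mul_X_pow_le _ _).trans (h i hi)

theorem genPoly_union {s s' : Finset ℕ} (h : Disjoint s s') (a : ℕ → R) :
    genPoly (s ∪ s') a = genPoly s a + genPoly s' a :=
  sum_union h

end GeneratingPolynomial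

theorem Polynomial.eq_of_eval_eq_of_ne_zero {R : Type*} [CommRing R] [IsDomain R] [Infinite R]
    {p q : R[X]} (h : ∀ x ≠ 0, p.eval x = q.eval x) : p = q :=
  eq_of_infinite_eval_eq p q ((Set.finite_singleton 0).infinite_compl.mono fun x hx => h x hx)

theorem Polynomial.eval_eq_coeff_zero_add_sum_Icc {R : Type*} [Semiring R] {p : R[X]} {n : ℕ}
    (h : p.natDegree ≤ n) (x : R) : p.eval x = p.coeff 0 + ∑ i ∈ Icc 1 n, p.coeff i * x ^ i := by
  rw [eval_eq_sum_range' (Nat.lt_succ_of_le h), Nat.range_succ_eq_Icc_zero,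
    Icc_eq_cons_Ioc (Nat.zero_le n), sum_cons, ← Icc_add_one_left_eq_Ioc, zero_add, pow_zero,
    mul_one]

theorem Finset.sum_Icc_shift_add {M : Type*} [AddCommMonoid M] (f : ℕ → M) (m : ℕ) :
    ∑ i ∈ Icc 1 m, f (i + 1) + f 1 = ∑ i ∈ Icc 1 m, f i + f (m + 1) := by
  induction m with
  | zero => simp
  | succ m ih => rw [sum_Icc_succ_top (by omega), sum_Icc_succ_top (by omega), add_right_comm, ih]

theorem pow_mul_zpow_sub_add_one {G₀ : Type*} [GroupWithZero G₀] {x : G₀} (hx : x ≠ 0) (i m : ℕ) :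
    x ^ m * x ^ ((i : ℤ) - (m + 1 : ℕ) + 1) = x ^ i := by
  rw [← zpow_natCast, ← zpow_add₀ hx, ← zpow_natCast]
  congr 1
  push_cast
  ring

section GeneratingFunctions

variable {g : ℕ} {u : ℕ → (Fin g → ℝ) → ℝ} {ξ : ℝ}

theorem bfu_apply_eq_eval (u : ℕ → (Fin g → ℝ) → ℝ) (ξ : ℝ) (t : Fin g → ℝ) :
    bfu u ξ t = (genPoly (Icc 1 g) (u · t)).eval ξ :=
  (eval_genPoly _ _ _).symm

theorem contDiff_bfu (hu : ∀ i, ContDiff ℝ ∞ (u i)) (ξ : ℝ) : ContDiff ℝ ∞ (bfu u ξ) :=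
  ContDiff.sum fun i _ => (hu i).mul contDiff_const

theorem pd_bfu (hu : ∀ i, Differentiable ℝ (u i)) (k : ℕ) (ξ : ℝ) :
    pd k (bfu u ξ) = bfu (fun i => pd k (u i)) ξ := by
  funext t
  unfold bfu
  rw [pd_sum _ fun i _ => by fun_prop]
  simp [pd_mul (hu _ t) (differentiableAt_const _), pd_const]

theorem DkA_apply (u : ℕ → (Fin g → ℝ) → ℝ) (k : ℕ) (ξ : ℝ) (t : Fin g → ℝ) :
    DkA u k ξ t = ξ ^ (1 - (k : ℤ))
      - 1 / 2 * ∑ i ∈ Icc 1 (k - 1), u i t * ξ ^ ((i : ℤ) - k + 1) := by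
  simp only [DkA, neg_mul, sum_neg_distrib]
  ring

theorem contDiff_DkA (hu : ∀ i, ContDiff ℝ ∞ (u i)) (k : ℕ) (ξ : ℝ) :
    ContDiff ℝ ∞ (DkA u k ξ) :=
  contDiff_const.mul (contDiff_const.add (ContDiff.sum fun i _ => (hu i).neg.mul contDiff_const))

theorem pd_DkA (hu : ∀ i, Differentiable ℝ (u i)) (j k : ℕ) (ξ : ℝ) :
    pd j (DkA u k ξ) = fun t => DkA (fun i => pd j (u i)) k ξ t - ξ ^ (1 - (k : ℤ)) := by
  funext t
  simp only [funext (DkA_apply u k ξ)]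
  rw [pd_sub (by fun_prop) (by fun_prop), pd_const, pd_mul (by fun_prop) (by fun_prop), pd_const,
    pd_sum _ fun i _ => by fun_prop]
  simp [DkA_apply, pd_mul (hu _ t) (differentiableAt_const _), pd_const]

theorem pd_DkA_sub_const (hu : ∀ i, ContDiff ℝ ∞ (u i)) (j k : ℕ) (ξ : ℝ) :
    pd j (fun t => DkA u k ξ t - ξ ^ (1 - (k : ℤ)))
      = fun t => DkA (fun i => pd j (u i)) k ξ t - ξ ^ (1 - (k : ℤ)) := by
  funext t
  rw [pd_sub ((contDiff_DkA hu k ξ).differentiable (by simp) t) (differentiableAt_const _),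
    pd_const, sub_zero, pd_DkA fun i => (hu i).differentiable (by simp)]

theorem pd_one_DkA (hu : ∀ i, Differentiable ℝ (u i)) (k : ℕ) (ξ : ℝ) (t : Fin g → ℝ) :
    pd 1 (DkA u k ξ) t = -DkB u k ξ t := by
  simp only [pd_DkA hu, DkA_apply, DkB]
  ring

theorem pow_mul_DkA (hξ : ξ ≠ 0) (m : ℕ) (t : Fin g → ℝ) :
    ξ ^ m * DkA u (m + 1) ξ t = 1 - 1 / 2 * ∑ i ∈ Icc 1 m, u i t * ξ ^ i := by
  rw [DkA_apply, Nat.add_sub_cancel, mul_sub, mul_left_comm, mul_sum]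
  congr 2
  · simpa [neg_add_eq_sub] using pow_mul_zpow_sub_add_one hξ 0 m
  · exact sum_congr rfl fun i _ => by rw [mul_left_comm, pow_mul_zpow_sub_add_one hξ]

theorem pow_mul_DkB (hξ : ξ ≠ 0) (m : ℕ) (t : Fin g → ℝ) :
    ξ ^ m * DkB u (m + 1) ξ t = 1 / 2 * ∑ i ∈ Icc 1 m, pd 1 (u i) t * ξ ^ i := by
  rw [DkB, Nat.add_sub_cancel, mul_left_comm, mul_sum]
  exact congrArg _ (sum_congr rfl fun i _ => by rw [mul_left_comm, pow_mul_zpow_sub_add_one hξ])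

end GeneratingFunctions

section Coefficients

variable {g : ℕ} {u : ℕ → (Fin g → ℝ) → ℝ} {ξ : ℝ}

/-- Equation (4mu′). -/
def Eq4muPrime (u : ℕ → (Fin g → ℝ) → ℝ) : Prop :=
  ∀ t, ∀ ξ : ℝ, ξ ≠ 0 →
    bfu3 u ξ t + 2 * pd 1 (u 1) t * (2 - bfu u ξ t) - 4 * (ξ⁻¹ + u 1 t) * bfu1 u ξ t = 0

/-- Equation (dkq). -/
def EqDkq (u : ℕ → (Fin g → ℝ) → ℝ) : Prop :=
  ∀ k, 1 ≤ k → k ≤ g → ∀ t, ∀ ξ : ℝ, ξ ≠ 0 →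
    pd k (bfu u ξ) t = DkA u k ξ t * bfu1 u ξ t - DkB u k ξ t * (2 - bfu u ξ t)

theorem third_pd_one_u_eq (h4 : Eq4muPrime u) {i : ℕ} (hi : 1 ≤ i) (hig : i < g)
    (t : Fin g → ℝ) :
    pd 1 (pd 1 (pd 1 (u i))) t
      = 2 * pd 1 (u 1) t * u i t + 4 * u 1 t * pd 1 (u i) t + 4 * pd 1 (u (i + 1)) t := by
  set U := genPoly (Icc 1 g) (u · t)
  set U1 := genPoly (Icc 1 g) (fun n => pd 1 (u n) t)
  set U3 := genPoly (Icc 1 g) (fun n => pd 1 (pd 1 (pd 1 (u n))) t)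
  have hpoly : X * U3 + C (2 * pd 1 (u 1) t) * (X * (C 2 - U))
      - C 4 * (U1 + C (u 1 t) * (X * U1)) = 0 := by
    refine eq_of_eval_eq_of_ne_zero fun ξ hξ => ?_
    simp only [U, U1, U3, eval_sub, eval_add, eval_mul, eval_C, eval_X, eval_genPoly, eval_zero]
    have h := h4 t ξ hξ
    simp only [bfu, bfu1, bfu3] at h
    field_simp at h
    linear_combination h
  have := congrArg (coeff · (i + 1)) hpoly
  simp only [U, U1, U3, coeff_sub, coeff_add, coeff_C_mul, coeff_X_mul, coeff_genPoly, coeff_C,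
    coeff_zero] at this
  simp [hi, hig.le, Nat.succ_le_of_lt hig, show i ≠ 0 by omega] at this
  linear_combination this

theorem pd_u_one_eq_pd_one_u (hu : ∀ i, Differentiable ℝ (u i)) (hdkq : EqDkq u) {k : ℕ}
    (hk : 1 ≤ k) (hkg : k ≤ g) (t : Fin g → ℝ) : pd k (u 1) t = pd 1 (u k) t := by
  obtain ⟨m, rfl⟩ : ∃ m, k = m + 1 := ⟨k - 1, by omega⟩
  have hsplit : Icc 1 g = Icc 1 m ∪ Icc (m + 1) g := by
    ext; simp only [mem_union, mem_Icc]; omega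
  have hdisj : Disjoint (Icc 1 m) (Icc (m + 1) g) :=
    disjoint_left.2 fun i hi hi' => by simp only [mem_Icc] at hi hi'; omega
  set L := genPoly (Icc 1 m) (u · t)
  set L1 := genPoly (Icc 1 m) (fun i => pd 1 (u i) t)
  set H := genPoly (Icc (m + 1) g) (u · t)
  set H1 := genPoly (Icc (m + 1) g) (fun i => pd 1 (u i) t)
  -- `ξ^m` times (dkq), with `𝐮 = L + H` and `𝐮' = L1 + H1` split at degree `m + 1`
  have hpoly : X ^ m * genPoly (Icc 1 g) (fun i => pd (m + 1) (u i) t)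
      = C (1 / 2) * (C 2 * H1 - (L * H1 - L1 * H)) := by
    refine eq_of_eval_eq_of_ne_zero fun ξ hξ => ?_
    have h := hdkq (m + 1) hk hkg t ξ hξ
    have hA := pow_mul_DkA (u := u) hξ m t
    have hB := pow_mul_DkB (u := u) hξ m t
    have hU : bfu u ξ t = L.eval ξ + H.eval ξ := by
      rw [bfu_apply_eq_eval, hsplit, genPoly_union hdisj, eval_add]
    have hU1 : bfu1 u ξ t = L1.eval ξ + H1.eval ξ := by
      rw [bfu1, ← eval_genPoly, hsplit, genPoly_union hdisj, eval_add]
    rw [pd_bfu hu, bfu_apply_eq_eval] at h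
    rw [← eval_genPoly] at hA hB
    simp only [eval_mul, eval_sub, eval_C, eval_pow, eval_X]
    linear_combination ξ ^ m * h + bfu1 u ξ t * hA - (2 - bfu u ξ t) * hB
      + (1 - L.eval ξ / 2) * hU1 + L1.eval ξ / 2 * hU
  have hcross : X ^ (m + 2) ∣ L * H1 - L1 * H := by
    have hX : ∀ a : ℕ → ℝ, X ∣ genPoly (Icc 1 m) a := fun a => by
      simpa using X_pow_dvd_genPoly (n := 1) (fun i hi => (mem_Icc.1 hi).1) a
    have hXm : ∀ a : ℕ → ℝ, X ^ (m + 1) ∣ genPoly (Icc (m + 1) g) a := fun a =>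
      X_pow_dvd_genPoly (fun i hi => (mem_Icc.1 hi).1) a
    rw [pow_succ']
    exact dvd_sub (mul_dvd_mul (hX _) (hXm _)) (mul_dvd_mul (hX _) (hXm _))
  have := congrArg (coeff · (m + 1)) hpoly
  rw [coeff_X_pow_mul', coeff_C_mul, coeff_sub, X_pow_dvd_iff.1 hcross (m + 1) (by omega)] at this
  simp [H1, coeff_genPoly, show 1 ≤ g by omega, hkg] at this
  linear_combination this

theorem third_pd_one_DkA_eq (hu : ∀ i, ContDiff ℝ ∞ (u i))
    {k : ℕ} (hrec : ∀ i, 1 ≤ i → i < k → ∀ t, pd 1 (pd 1 (pd 1 (u i))) t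
      = 2 * pd 1 (u 1) t * u i t + 4 * u 1 t * pd 1 (u i) t + 4 * pd 1 (u (i + 1)) t)
    (hk : 1 ≤ k) (hξ : ξ ≠ 0) (t : Fin g → ℝ) :
    pd 1 (pd 1 (pd 1 (DkA u k ξ))) t = 2 * pd 1 (u 1) t * DkA u k ξ t
      + 4 * (ξ⁻¹ + u 1 t) * pd 1 (DkA u k ξ) t - 2 * pd 1 (u k) t := by
  obtain ⟨m, rfl⟩ : ∃ m, k = m + 1 := ⟨k - 1, by omega⟩
  have hu1 i := contDiff_pd 1 (hu i)
  have hu2 i := contDiff_pd 1 (hu1 i)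
  have hA1 := pd_DkA (fun i => (hu i).differentiable (by simp)) 1 (m + 1) ξ
  have hA2 : pd 1 (pd 1 (DkA u (m + 1) ξ)) = fun s =>
      DkA (fun i => pd 1 (pd 1 (u i))) (m + 1) ξ s - ξ ^ (1 - ((m + 1 : ℕ) : ℤ)) := by
    rw [hA1, pd_DkA_sub_const hu1]
  have hA3 : pd 1 (pd 1 (pd 1 (DkA u (m + 1) ξ))) t =
      DkA (fun i => pd 1 (pd 1 (pd 1 (u i)))) (m + 1) ξ t - ξ ^ (1 - ((m + 1 : ℕ) : ℤ)) := by
    rw [hA2, pd_DkA_sub_const hu2]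
  set S := ∑ i ∈ Icc 1 m, pd 1 (u (i + 1)) t * ξ ^ i
  have hshift : S + pd 1 (u 1) t
      = ξ⁻¹ * ∑ i ∈ Icc 1 m, pd 1 (u i) t * ξ ^ i + ξ ^ m * pd 1 (u (m + 1)) t := by
    have := sum_Icc_shift_add (fun i => pd 1 (u i) t * ξ ^ i) m
    simp only [pow_succ, ← mul_assoc, ← sum_mul] at this
    field_simp
    linear_combination this
  have hsum : ∑ i ∈ Icc 1 m, pd 1 (pd 1 (pd 1 (u i))) t * ξ ^ i
      = 2 * pd 1 (u 1) t * ∑ i ∈ Icc 1 m, u i t * ξ ^ i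
        + 4 * u 1 t * ∑ i ∈ Icc 1 m, pd 1 (u i) t * ξ ^ i + 4 * S := by
    rw [mul_sum, mul_sum, mul_sum, ← sum_add_distrib, ← sum_add_distrib]
    refine sum_congr rfl fun i hi => ?_
    rw [hrec i (mem_Icc.1 hi).1 (by have := (mem_Icc.1 hi).2; omega)]
    ring
  have h0 : ξ ^ m * ξ ^ (1 - ((m + 1 : ℕ) : ℤ)) = 1 := by
    simpa [neg_add_eq_sub] using pow_mul_zpow_sub_add_one hξ 0 m
  have e1 := pow_mul_DkA (u := u) hξ m t
  have e2 := pow_mul_DkA (u := fun i => pd 1 (u i)) hξ m t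
  have e3 := pow_mul_DkA (u := fun i => pd 1 (pd 1 (pd 1 (u i)))) hξ m t
  apply mul_left_cancel₀ (pow_ne_zero m hξ)
  rw [hA3, hA1]
  linear_combination e3 - 2 * pd 1 (u 1) t * e1 - 4 * (ξ⁻¹ + u 1 t) * e2
    + (4 * (ξ⁻¹ + u 1 t) - 1) * h0 - 1 / 2 * hsum - 2 * hshift

end Coefficients

section Conservation

variable {g : ℕ} {u : ℕ → (Fin g → ℝ) → ℝ} {ξ : ℝ}

noncomputable def muGen (u : ℕ → (Fin g → ℝ) → ℝ) (ξ : ℝ) : (Fin g → ℝ) → ℝ :=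
  fun s => bfu1 u ξ s ^ 2 + 2 * bfu2 u ξ s * (2 - bfu u ξ s)
    + 4 * (ξ⁻¹ + u 1 s) * (2 - bfu u ξ s) ^ 2

theorem contDiff_muGen (hu : ∀ i, ContDiff ℝ ∞ (u i)) (ξ : ℝ) : ContDiff ℝ ∞ (muGen u ξ) := by
  have h0 := contDiff_bfu hu ξ
  have h1 : ContDiff ℝ ∞ (bfu1 u ξ) := contDiff_bfu (fun i => contDiff_pd 1 (hu i)) ξ
  have h2 : ContDiff ℝ ∞ (bfu2 u ξ) :=
    contDiff_bfu (fun i => contDiff_pd 1 (contDiff_pd 1 (hu i))) ξ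
  have hu1 := hu 1
  unfold muGen
  fun_prop

theorem pd_muGen_eq_zero (hu : ∀ i, ContDiff ℝ ∞ (u i)) (h4 : Eq4muPrime u) (hdkq : EqDkq u)
    {j : ℕ} (hj : 1 ≤ j) (hjg : j ≤ g) (hξ : ξ ≠ 0) (t : Fin g → ℝ) :
    pd j (muGen u ξ) t = 0 := by
  have hd i : Differentiable ℝ (u i) := (hu i).differentiable (by simp)
  have hd1 i : Differentiable ℝ (pd 1 (u i)) := (contDiff_pd 1 (hu i)).differentiable (by simp)
  have hd2 i : Differentiable ℝ (pd 1 (pd 1 (u i))) :=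
    (contDiff_pd 1 (contDiff_pd 1 (hu i))).differentiable (by simp)
  set Q : (Fin g → ℝ) → ℝ := fun s => 2 - bfu u ξ s
  have hQ1 : pd 1 Q = fun s => -bfu1 u ξ s := by
    funext s; rw [pd_const_sub, pd_bfu hd]; rfl
  have hQ2 : pd 1 (pd 1 Q) = fun s => -bfu2 u ξ s := by
    funext s; rw [hQ1, pd_neg]; exact congrArg _ (congrFun (pd_bfu hd1 1 ξ) s)
  have hQ3 : pd 1 (pd 1 (pd 1 Q)) = fun s => -bfu3 u ξ s := by
    funext s; rw [hQ2, pd_neg]; exact congrArg _ (congrFun (pd_bfu hd2 1 ξ) s)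
  have hF : muGen u ξ = fun s => pd 1 Q s ^ 2 - 2 * pd 1 (pd 1 Q) s * Q s
      + 4 * (ξ⁻¹ + u 1 s) * Q s ^ 2 := by
    funext s; rw [hQ2, hQ1]; simp only [muGen, Q]; ring
  rw [hF]
  refine pd_firstIntegral_eq_zero (contDiff_const.sub (contDiff_bfu hu ξ)) (contDiff_DkA hu j ξ)
    (contDiff_const.add (hu 1)) t ?_ ?_ ?_
  · funext s
    rw [pd_const_sub, hdkq j hj hjg s ξ hξ, hQ1, pd_one_DkA hd]
    ring
  · rw [hQ3, hQ1, pd_const_add]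
    linear_combination -h4 t ξ hξ
  · rw [third_pd_one_DkA_eq hu (fun i hi hik => third_pd_one_u_eq h4 hi (by omega)) hj hξ,
      pd_const_add, pd_const_add, pd_u_one_eq_pd_one_u hd hdkq hj hjg]

theorem exists_poly_muGen (hg : 1 ≤ g) (u : ℕ → (Fin g → ℝ) → ℝ) (t : Fin g → ℝ) :
    ∃ P : ℝ[X], P.natDegree ≤ 2 * g ∧ P.coeff 0 = 0 ∧
      ∀ ξ ≠ 0, muGen u ξ t = 16 * ξ⁻¹ + P.eval ξ := by
  set U := genPoly (Icc 1 g) (u · t)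
  set U1 := genPoly (Icc 1 g) (fun i => pd 1 (u i) t)
  set U2 := genPoly (Icc 1 g) (fun i => pd 1 (pd 1 (u i)) t)
  have hdeg : ∀ a : ℕ → ℝ, (genPoly (Icc 1 g) a).natDegree ≤ g :=
    natDegree_genPoly_le fun i hi => (mem_Icc.1 hi).2
  have hX : ∀ a : ℕ → ℝ, (genPoly (Icc 1 g) a).coeff 0 = 0 := fun a => by simp [coeff_genPoly]
  -- `4(ξ⁻¹ + u_1)(2 − 𝐮)² − 16ξ⁻¹ = 4ξ⁻¹𝐮(𝐮 − 4) + 4u_1(2 − 𝐮)²`, and `ξ⁻¹𝐮(ξ)` is `U.divX`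
  refine ⟨U1 ^ 2 + C 2 * U2 * (C 2 - U) + C 4 * U.divX * (U - C 4) + C (4 * u 1 t) * (C 2 - U) ^ 2,
    ?_, ?_, fun ξ hξ => ?_⟩
  · have hD : U.divX.natDegree ≤ g := natDegree_divX_le.trans (hdeg _)
    have hC : ∀ c : ℝ, (C c).natDegree ≤ 0 := fun c => natDegree_C c ▸ le_rfl
    refine natDegree_add_le_of_degree_le (natDegree_add_le_of_degree_le
      (natDegree_add_le_of_degree_le ?_ ?_) ?_) ?_
    · exact (natDegree_pow_le_of_le 2 (hdeg _)).trans (by omega)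
    · exact (natDegree_mul_le_of_le (natDegree_mul_le_of_le (hC 2) (hdeg _))
        (natDegree_sub_le_of_le (hC 2) (hdeg _))).trans (by omega)
    · exact (natDegree_mul_le_of_le (natDegree_mul_le_of_le (hC 4) hD)
        (natDegree_sub_le_of_le (hdeg _) (hC 4))).trans (by omega)
    · exact (natDegree_mul_le_of_le (hC _)
        (natDegree_pow_le_of_le 2 (natDegree_sub_le_of_le (hC 2) (hdeg _)))).trans (by omega)
  · have hU0 : U.eval 0 = 0 := by rw [← coeff_zero_eq_eval_zero, hX]
    have hD0 : U.divX.eval 0 = u 1 t := by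
      rw [← coeff_zero_eq_eval_zero, coeff_divX]
      simp [U, coeff_genPoly, hg]
    rw [coeff_zero_eq_eval_zero]
    simp [hU0, hD0, U1, U2, ← coeff_zero_eq_eval_zero, hX]
    ring
  · have hdiv : ξ * U.divX.eval ξ = U.eval ξ := by
      conv_rhs => rw [← X_mul_divX_add U]
      simp [U, hX]
    simp only [muGen, bfu_apply_eq_eval, bfu1, bfu2, ← eval_genPoly]
    simp only [eval_add, eval_mul, eval_sub, eval_pow, eval_C]
    field_simp
    linear_combination -(4 * (U.eval ξ - 4)) * hdiv

theorem exists_mu_of_pd_muGen_eq_zero (hg : 1 ≤ g) (hu : ∀ i, ContDiff ℝ ∞ (u i))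
    (hpd : ∀ j, 1 ≤ j → j ≤ g → ∀ ξ : ℝ, ξ ≠ 0 → ∀ t, pd j (muGen u ξ) t = 0) :
    ∃ μ : ℕ → ℝ, ∀ t, ∀ ξ : ℝ, ξ ≠ 0 →
      muGen u ξ t = 16 * ξ⁻¹ + 4 * ∑ i ∈ Icc 1 (2 * g), μ i * ξ ^ i := by
  obtain ⟨P, hdeg, h0, hP⟩ := exists_poly_muGen hg u 0
  refine ⟨fun i => P.coeff i / 4, fun t ξ hξ => ?_⟩
  rw [eq_of_forall_pd_eq_zero ((contDiff_muGen hu ξ).differentiable (by simp))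
    (fun j hj hjg => hpd j hj hjg ξ hξ) t 0, hP ξ hξ, eval_eq_coeff_zero_add_sum_Icc hdeg, h0,
    mul_sum, zero_add]
  exact congrArg _ (sum_congr rfl fun i _ => by ring)

end Conservation

/-- Assume equations (4mu′) and (dkq). Then there exist real constants
`μ_1, …, μ_{2g}` such that for all `t` and all real `ξ ≠ 0`:
`𝐮'(ξ)² + 2𝐮''(ξ)(2 − 𝐮(ξ)) + 4(ξ⁻¹ + u_1)(2 − 𝐮(ξ))² = 16ξ⁻¹ + 4∑_{i=1}^{2g} μ_i ξ^i`;
equivalently, every `t`-partial derivative `∂_j` (`j = 1, …, g`) of the left-hand side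
vanishes identically for every fixed `ξ ≠ 0`. -/
theorem statement4 (g : ℕ) (hg : 1 ≤ g) (u : ℕ → (Fin g → ℝ) → ℝ)
    (hu : ∀ i, ContDiff ℝ (⊤ : ℕ∞) (u i))
    (h4mu' : ∀ t, ∀ ξ : ℝ, ξ ≠ 0 →
      bfu3 u ξ t + 2 * pd 1 (u 1) t * (2 - bfu u ξ t)
        - 4 * (ξ⁻¹ + u 1 t) * bfu1 u ξ t = 0)
    (hdkq : ∀ k, 1 ≤ k → k ≤ g → ∀ t, ∀ ξ : ℝ, ξ ≠ 0 →
      pd k (bfu u ξ) t = DkA u k ξ t * bfu1 u ξ t - DkB u k ξ t * (2 - bfu u ξ t)) :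
    (∃ μ : ℕ → ℝ, ∀ t, ∀ ξ : ℝ, ξ ≠ 0 →
        bfu1 u ξ t ^ 2 + 2 * bfu2 u ξ t * (2 - bfu u ξ t)
          + 4 * (ξ⁻¹ + u 1 t) * (2 - bfu u ξ t) ^ 2
        = 16 * ξ⁻¹ + 4 * ∑ i ∈ Finset.Icc 1 (2*g), μ i * ξ ^ i)
    ∧ (∀ j, 1 ≤ j → j ≤ g → ∀ ξ : ℝ, ξ ≠ 0 → ∀ t,
        pd j (fun s => bfu1 u ξ s ^ 2 + 2 * bfu2 u ξ s * (2 - bfu u ξ s)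
          + 4 * (ξ⁻¹ + u 1 s) * (2 - bfu u ξ s) ^ 2) t = 0) := by
  have hpd : ∀ j, 1 ≤ j → j ≤ g → ∀ ξ : ℝ, ξ ≠ 0 → ∀ t, pd j (muGen u ξ) t = 0 :=
    fun j hj hjg ξ hξ t => pd_muGen_eq_zero hu h4mu' hdkq hj hjg hξ t
  exact ⟨exists_mu_of_pd_muGen_eq_zero hg hu hpd, hpd⟩
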